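/- arXiv:2502.01215 — 5 statements merged into one kernel-verified Lean document; each statement's English description precedes it below -/
import Mathlib

section
/- Let X ⊆ V with |X| ≤ k and suppose M is a stable matching in the instance K_X. Then M matches each selector agent s_i (i=1,…,k) to an agent of X; consequently |X| = k, M is a perfect matching of K_X, and X is an independent set in G. -/
/-- A Stable Roommates instance on agent type `α`: a symmetric, loopless
acceptability relation, together with, for each agent `u`, a strict linear
order `pref u` over the agents acceptable to `u`
(`pref u x y` means `u` strictly prefers `x` to `y`). -/
structure SR (α : Type*) where
  accept : α → α → Prop
  symm : ∀ {u v}, accept u v → accept v u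
  loopless : ∀ u, ¬ accept u u
  pref : α → α → α → Prop
  pref_acc : ∀ {u x y}, pref u x y → accept u x ∧ accept u y
  pref_irrefl : ∀ u x, ¬ pref u x x
  pref_trans : ∀ {u x y z}, pref u x y → pref u y z → pref u x z
  pref_total : ∀ {u x y}, accept u x → accept u y → x ≠ y → pref u x y ∨ pref u y x

namespace SR

variable {α : Type*}

/-- `M` is a matching in `I`: a set of acceptable pairs in which
every agent has at most one partner. -/
def IsMatching (I : SR α) (M : Finset (Sym2 α)) : Prop :=
  (∀ u v : α, s(u, v) ∈ M → I.accept u v) ∧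
  (∀ u v w : α, s(u, v) ∈ M → s(u, w) ∈ M → v = w)

/-- The pair `{u, v}` blocks the matching `M` in `I`. -/
def Blocks (I : SR α) (M : Finset (Sym2 α)) (u v : α) : Prop :=
  I.accept u v ∧ (∀ w, s(u, w) ∈ M → I.pref u v w) ∧ (∀ w, s(v, w) ∈ M → I.pref v u w)

/-- `M` is a stable matching in `I`. -/
def IsStable (I : SR α) (M : Finset (Sym2 α)) : Prop :=
  I.IsMatching M ∧ ∀ u v, ¬ I.Blocks M u v

/-- The instance obtained from `I` by deleting the acceptability of the pairs in `F`. -/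
def delPairs (I : SR α) (F : Set (Sym2 α)) : SR α where
  accept u v := I.accept u v ∧ s(u, v) ∉ F
  symm h := ⟨I.symm h.1, by rw [Sym2.eq_swap]; exact h.2⟩
  loopless u h := I.loopless u h.1
  pref u x y := I.pref u x y ∧ s(u, x) ∉ F ∧ s(u, y) ∉ F
  pref_acc h := ⟨⟨(I.pref_acc h.1).1, h.2.1⟩, ⟨(I.pref_acc h.1).2, h.2.2⟩⟩
  pref_irrefl u x h := I.pref_irrefl u x h.1
  pref_trans h1 h2 := ⟨I.pref_trans h1.1 h2.1, h1.2.1, h2.2.2⟩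
  pref_total hx hy hne :=
    (I.pref_total hx.1 hy.1 hne).imp (fun h => ⟨h, hx.2, hy.2⟩) (fun h => ⟨h, hy.2, hx.2⟩)

/-- The sub-instance of `I` induced by the agent set `T`. -/
def induce (I : SR α) (T : Set α) : SR α where
  accept u v := I.accept u v ∧ u ∈ T ∧ v ∈ T
  symm h := ⟨I.symm h.1, h.2.2, h.2.1⟩
  loopless u h := I.loopless u h.1
  pref u x y := I.pref u x y ∧ u ∈ T ∧ x ∈ T ∧ y ∈ T
  pref_acc h := ⟨⟨(I.pref_acc h.1).1, h.2.1, h.2.2.1⟩, ⟨(I.pref_acc h.1).2, h.2.1, h.2.2.2⟩⟩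
  pref_irrefl u x h := I.pref_irrefl u x h.1
  pref_trans h1 h2 := ⟨I.pref_trans h1.1 h2.1, h1.2.1, h1.2.2.1, h2.2.2.2⟩
  pref_total hx hy hne :=
    (I.pref_total hx.1 hy.1 hne).imp (fun h => ⟨h, hx.2.1, hx.2.2, hy.2.2⟩)
      (fun h => ⟨h, hx.2.1, hy.2.2, hx.2.2⟩)

/-- The instance obtained from `I` by deleting the agents in `W`. -/
def delAgents (I : SR α) (W : Set α) : SR α := I.induce Wᶜ

end SR

/-! ## The selector construction `K(G, k)` -/

/-- Agents of the instance `K(G, k)`: the vertices of `G` (addable) and, for each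
`i < k`, the original agents `s_i`, `a_i`, `b_i`.  (Agents `sel i`, `a i`, `b i`
with `i ≥ k` are inactive: they accept nobody.) -/
inductive KAg (V : Type*) where
  | vtx : V → KAg V
  | sel : ℕ → KAg V
  | a : ℕ → KAg V
  | b : ℕ → KAg V
  deriving DecidableEq

/-- The acceptability lists of `K(G, k)`. -/
def selBaseAcc {V : Type*} (G : SimpleGraph V) (k : ℕ) (x y : KAg V) : Prop :=
  (∃ u v : V, G.Adj u v ∧ x = KAg.vtx u ∧ y = KAg.vtx v) ∨
  (∃ v : V, ∃ i < k, x = KAg.vtx v ∧ y = KAg.sel i) ∨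
  (∃ i < k, x = KAg.sel i ∧ (y = KAg.a i ∨ y = KAg.b i)) ∨
  (∃ i < k, x = KAg.a i ∧ y = KAg.b i)

/-- `I` is a realization of the instance `K(G, k)`: acceptability as prescribed, and
preferences respecting all comparisons forced by the construction (within each
unordered set the order is arbitrary; the selectors are ranked `s_1 ≻ ⋯ ≻ s_k`
by every vertex agent). -/
def IsSelInstance {V : Type*} (G : SimpleGraph V) (k : ℕ) (I : SR (KAg V)) : Prop :=
  (∀ x y, I.accept x y ↔ (selBaseAcc G k x y ∨ selBaseAcc G k y x)) ∧
  -- v: N(v) ≻ s_1 ≻ ⋯ ≻ s_k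
  (∀ v u : V, G.Adj u v → ∀ i < k, I.pref (KAg.vtx v) (KAg.vtx u) (KAg.sel i)) ∧
  (∀ v : V, ∀ i j : ℕ, i < j → j < k → I.pref (KAg.vtx v) (KAg.sel i) (KAg.sel j)) ∧
  -- s_i: V ≻ a_i ≻ b_i
  (∀ i < k, ∀ v : V, I.pref (KAg.sel i) (KAg.vtx v) (KAg.a i)) ∧
  (∀ i < k, I.pref (KAg.sel i) (KAg.a i) (KAg.b i)) ∧
  -- a_i: b_i ≻ s_i
  (∀ i < k, I.pref (KAg.a i) (KAg.b i) (KAg.sel i)) ∧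
  -- b_i: s_i ≻ a_i
  (∀ i < k, I.pref (KAg.b i) (KAg.sel i) (KAg.a i))

/-- The original agents `{s_i, a_i, b_i : i < k}` of `K(G, k)`. -/
def selOrig {V : Type*} (k : ℕ) : Set (KAg V) :=
  {x | ∃ i < k, x = KAg.sel i ∨ x = KAg.a i ∨ x = KAg.b i}

/-- The agent set of the sub-instance `K_X`. -/
def selAgents {V : Type*} (k : ℕ) (X : Set V) : Set (KAg V) :=
  selOrig k ∪ {x | ∃ v ∈ X, x = KAg.vtx v}


section Aux
variable {V : Type*} {G : SimpleGraph V} {k : ℕ}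

lemma accSel_aux {i : ℕ} (hi : i < k) {y : KAg V}
    (h : selBaseAcc G k (KAg.sel i) y ∨ selBaseAcc G k y (KAg.sel i)) :
    (∃ v : V, y = KAg.vtx v) ∨ y = KAg.a i ∨ y = KAg.b i := by
  rcases h with h | h <;> simp only [selBaseAcc] at h <;>
    rcases h with ⟨u, v, _, h1, h2⟩ | ⟨v, j, hj, h1, h2⟩ | ⟨j, hj, h1, h2⟩ | ⟨j, hj, h1, h2⟩ <;>
    simp_all

lemma accA_aux {i : ℕ} (hi : i < k) {y : KAg V}
    (h : selBaseAcc G k (KAg.a i) y ∨ selBaseAcc G k y (KAg.a i)) :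
    y = KAg.b i ∨ y = KAg.sel i := by
  rcases h with h | h <;> simp only [selBaseAcc] at h <;>
    rcases h with ⟨u, v, _, h1, h2⟩ | ⟨v, j, hj, h1, h2⟩ | ⟨j, hj, h1, h2⟩ | ⟨j, hj, h1, h2⟩ <;>
    simp_all

lemma accB_aux {i : ℕ} (hi : i < k) {y : KAg V}
    (h : selBaseAcc G k (KAg.b i) y ∨ selBaseAcc G k y (KAg.b i)) :
    y = KAg.sel i ∨ y = KAg.a i := by
  rcases h with h | h <;> simp only [selBaseAcc] at h <;>
    rcases h with ⟨u, v, _, h1, h2⟩ | ⟨v, j, hj, h1, h2⟩ | ⟨j, hj, h1, h2⟩ | ⟨j, hj, h1, h2⟩ <;>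
    simp_all

lemma accV_aux {v : V} {y : KAg V}
    (h : selBaseAcc G k (KAg.vtx v) y ∨ selBaseAcc G k y (KAg.vtx v)) :
    (∃ u : V, G.Adj v u ∧ y = KAg.vtx u) ∨ (∃ i, i < k ∧ y = KAg.sel i) := by
  rcases h with h | h <;> simp only [selBaseAcc] at h <;>
    rcases h with ⟨u, w, hadj, h1, h2⟩ | ⟨w, j, hj, h1, h2⟩ | ⟨j, hj, h1, h2⟩ | ⟨j, hj, h1, h2⟩
  · exact Or.inl ⟨w, by simp_all, h2⟩
  · simp_all
  · rcases h2 with h2 | h2 <;> simp_all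
  · simp_all
  · exact Or.inl ⟨u, by simp_all [G.adj_symm], by simp_all⟩
  · exact Or.inr ⟨j, hj, by simp_all⟩
  · simp_all
  · simp_all

end Aux

/-- Let `X ⊆ V` with `|X| ≤ k` and suppose `M` is a stable matching
in `K_X`. Then `M` matches each selector agent `s_i` (`i < k`) to an agent of `X`;
consequently `|X| = k`, `M` is a perfect matching of `K_X`, and `X` is an independent
set in `G`. -/


theorem csr_addAg_existsSM_backward {V : Type*} [Fintype V] [DecidableEq V]
    (G : SimpleGraph V) (k : ℕ) (hk : 0 < k)
    (I : SR (KAg V)) (hI : IsSelInstance G k I)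
    (X : Set V) (hcard : X.ncard ≤ k)
    (M : Finset (Sym2 (KAg V))) (hM : (I.induce (selAgents k X)).IsStable M) :
    (∀ i < k, ∃ v ∈ X, s(KAg.sel i, KAg.vtx v) ∈ M) ∧
    X.ncard = k ∧
    (∀ x ∈ selAgents k X, ∃ y, s(x, y) ∈ M) ∧
    (∀ u ∈ X, ∀ v ∈ X, ¬ G.Adj u v) := by
  classical
  obtain ⟨hacc, hpVS, hpSS, hpSV, hpSA, hpAB, hpBS⟩ := hI
  obtain ⟨⟨hMacc, hMuniq⟩, hstab⟩ := hM
  set T : Set (KAg V) := selAgents k X with hT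
  have hselT : ∀ i, i < k → KAg.sel i ∈ T := fun i hi => Or.inl ⟨i, hi, Or.inl rfl⟩
  have haT : ∀ i, i < k → KAg.a i ∈ T := fun i hi => Or.inl ⟨i, hi, Or.inr (Or.inl rfl)⟩
  have hbT : ∀ i, i < k → KAg.b i ∈ T := fun i hi => Or.inl ⟨i, hi, Or.inr (Or.inr rfl)⟩
  have hvT : ∀ v : V, v ∈ X → KAg.vtx v ∈ T := fun v hv => Or.inr ⟨v, hv, rfl⟩
  have hvT' : ∀ v : V, KAg.vtx v ∈ T → v ∈ X := by
    intro v hv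
    rcases hv with ⟨i, hi, h | h | h⟩ | ⟨u, hu, h⟩ <;> simp_all
  -- acceptability characterizations
  have accSel : ∀ i, i < k → ∀ y, I.accept (KAg.sel i) y →
      ((∃ v : V, y = KAg.vtx v) ∨ y = KAg.a i ∨ y = KAg.b i) := by
    intro i hi y hy
    rw [hacc] at hy
    exact accSel_aux hi hy
  have accA : ∀ i, i < k → ∀ y, I.accept (KAg.a i) y → (y = KAg.b i ∨ y = KAg.sel i) := by
    intro i hi y hy
    rw [hacc] at hy
    exact accA_aux hi hy
  have accB : ∀ i, i < k → ∀ y, I.accept (KAg.b i) y → (y = KAg.sel i ∨ y = KAg.a i) := by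
    intro i hi y hy
    rw [hacc] at hy
    exact accB_aux hi hy
  have accV : ∀ v : V, ∀ y, I.accept (KAg.vtx v) y →
      ((∃ u : V, G.Adj v u ∧ y = KAg.vtx u) ∨ (∃ i, i < k ∧ y = KAg.sel i)) := by
    intro v y hy
    rw [hacc] at hy
    exact accV_aux hy
  -- concrete acceptabilities
  have accSA : ∀ i, i < k → I.accept (KAg.sel i) (KAg.a i) := by
    intro i hi
    rw [hacc]
    exact Or.inl (Or.inr (Or.inr (Or.inl ⟨i, hi, rfl, Or.inl rfl⟩)))
  have accSB : ∀ i, i < k → I.accept (KAg.sel i) (KAg.b i) := by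
    intro i hi
    rw [hacc]
    exact Or.inl (Or.inr (Or.inr (Or.inl ⟨i, hi, rfl, Or.inr rfl⟩)))
  have accAB : ∀ i, i < k → I.accept (KAg.a i) (KAg.b i) := by
    intro i hi
    rw [hacc]
    exact Or.inl (Or.inr (Or.inr (Or.inr ⟨i, hi, rfl, rfl⟩)))
  -- helper: membership facts from a matching edge
  have hedge : ∀ u v : KAg V, s(u, v) ∈ M → I.accept u v ∧ u ∈ T ∧ v ∈ T :=
    fun u v h => hMacc u v h
  -- Step 1: each selector matched to a vertex of X
  have step1 : ∀ i, i < k → ∃ v ∈ X, s(KAg.sel i, KAg.vtx v) ∈ M := by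
    intro i hi
    by_contra hno
    push_neg at hno
    -- partners of sel i are a i or b i
    have hpart : ∀ w, s(KAg.sel i, w) ∈ M → w = KAg.a i ∨ w = KAg.b i := by
      intro w hw
      obtain ⟨haccw, _, hwT⟩ := hedge _ _ hw
      rcases accSel i hi w haccw with ⟨v, rfl⟩ | h | h
      · exact absurd hw (hno v (hvT' v hwT))
      · exact Or.inl h
      · exact Or.inr h
    by_cases hA : s(KAg.sel i, KAg.a i) ∈ M
    · -- b i is unmatched; {a i, b i} blocks
      have hbun : ∀ w, s(KAg.b i, w) ∈ M → False := by
        intro w hw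
        obtain ⟨haccw, _, _⟩ := hedge _ _ hw
        rcases accB i hi w haccw with rfl | rfl
        · have := hMuniq (KAg.sel i) (KAg.a i) (KAg.b i) hA (by rwa [Sym2.eq_swap] at hw)
          simp at this
        · have hA' : s(KAg.a i, KAg.sel i) ∈ M := by rwa [Sym2.eq_swap] at hA
          have := hMuniq (KAg.a i) (KAg.sel i) (KAg.b i) hA' (by rwa [Sym2.eq_swap] at hw)
          simp at this
      refine hstab (KAg.a i) (KAg.b i) ⟨⟨accAB i hi, haT i hi, hbT i hi⟩, ?_, ?_⟩
      · intro w hw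
        obtain ⟨haccw, _, _⟩ := hedge _ _ hw
        rcases accA i hi w haccw with rfl | rfl
        · exact absurd (by rwa [Sym2.eq_swap] at hw) (fun h => hbun _ h)
        · exact ⟨hpAB i hi, haT i hi, hbT i hi, hselT i hi⟩
      · intro w hw
        exact absurd hw (fun h => hbun _ h)
    · by_cases hB : s(KAg.sel i, KAg.b i) ∈ M
      · -- a i is unmatched; {sel i, a i} blocks
        have haun : ∀ w, s(KAg.a i, w) ∈ M → False := by
          intro w hw
          obtain ⟨haccw, _, _⟩ := hedge _ _ hw
          rcases accA i hi w haccw with rfl | rfl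
          · have hB' : s(KAg.b i, KAg.sel i) ∈ M := by rwa [Sym2.eq_swap] at hB
            have := hMuniq (KAg.b i) (KAg.sel i) (KAg.a i) hB' (by rwa [Sym2.eq_swap] at hw)
            simp at this
          · exact hA (by rwa [Sym2.eq_swap] at hw)
        refine hstab (KAg.sel i) (KAg.a i) ⟨⟨accSA i hi, hselT i hi, haT i hi⟩, ?_, ?_⟩
        · intro w hw
          rcases hpart w hw with rfl | rfl
          · exact absurd (by exact hw) (fun h => haun _ (by rwa [Sym2.eq_swap] at h))
          · exact ⟨hpSA i hi, hselT i hi, haT i hi, hbT i hi⟩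
        · intro w hw
          exact absurd hw (fun h => haun _ h)
      · -- sel i unmatched
        have hsun : ∀ w, s(KAg.sel i, w) ∈ M → False := by
          intro w hw
          rcases hpart w hw with rfl | rfl
          · exact hA hw
          · exact hB hw
        by_cases hAB : s(KAg.a i, KAg.b i) ∈ M
        · -- {sel i, b i} blocks
          refine hstab (KAg.sel i) (KAg.b i) ⟨⟨accSB i hi, hselT i hi, hbT i hi⟩, ?_, ?_⟩
          · intro w hw
            exact absurd hw (fun h => hsun _ h)
          · intro w hw
            obtain ⟨haccw, _, _⟩ := hedge _ _ hw
            rcases accB i hi w haccw with rfl | rfl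
            · exact absurd (by rwa [Sym2.eq_swap] at hw) (fun h => hsun _ h)
            · exact ⟨hpBS i hi, hbT i hi, hselT i hi, haT i hi⟩
        · -- a i and b i both unmatched: {a i, b i} blocks
          have haun : ∀ w, s(KAg.a i, w) ∈ M → False := by
            intro w hw
            obtain ⟨haccw, _, _⟩ := hedge _ _ hw
            rcases accA i hi w haccw with rfl | rfl
            · exact hAB hw
            · exact hsun _ (by rwa [Sym2.eq_swap] at hw)
          have hbun : ∀ w, s(KAg.b i, w) ∈ M → False := by
            intro w hw
            obtain ⟨haccw, _, _⟩ := hedge _ _ hw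
            rcases accB i hi w haccw with rfl | rfl
            · exact hsun _ (by rwa [Sym2.eq_swap] at hw)
            · exact haun _ (by rwa [Sym2.eq_swap] at hw)
          refine hstab (KAg.a i) (KAg.b i) ⟨⟨accAB i hi, haT i hi, hbT i hi⟩, ?_, ?_⟩
          · intro w hw; exact absurd hw (fun h => haun _ h)
          · intro w hw; exact absurd hw (fun h => hbun _ h)
  -- choose partners
  choose f hfX hfM using fun i (hi : i < k) => step1 i hi
  have hfinj : ∀ i, (hi : i < k) → ∀ j, (hj : j < k) → f i hi = f j hj → i = j := by
    intro i hi j hj hij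
    have h1 : s(KAg.vtx (f i hi), KAg.sel i) ∈ M := by rw [Sym2.eq_swap]; exact hfM i hi
    have h2 : s(KAg.vtx (f i hi), KAg.sel j) ∈ M := by
      rw [Sym2.eq_swap, hij]; exact hfM j hj
    have := hMuniq _ _ _ h1 h2
    simpa using this
  -- Step 2: |X| = k
  have hXfin : X.Finite := Set.toFinite X
  have hfin : Finite X := hXfin.to_subtype
  have hFt : Fintype X := Fintype.ofFinite X
  let g : Fin k → X := fun i => ⟨f i i.2, hfX i i.2⟩
  have hginj : Function.Injective g := by
    intro i j hij
    have : f i i.2 = f j j.2 := congrArg Subtype.val hij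
    exact Fin.ext (hfinj _ _ _ _ this)
  have hk_le : k ≤ X.ncard := by
    have := Fintype.card_le_of_injective g hginj
    rwa [Fintype.card_fin, ← Nat.card_eq_fintype_card, Nat.card_coe_set_eq] at this
  have hXk : X.ncard = k := le_antisymm hcard hk_le
  -- g is bijective
  have hgsurj : Function.Surjective g := by
    have hcards : Fintype.card (Fin k) = Fintype.card X := by
      rw [Fintype.card_fin, ← hXk, ← Nat.card_coe_set_eq, Nat.card_eq_fintype_card]
    exact ((Fintype.bijective_iff_injective_and_card g).2 ⟨hginj, hcards⟩).2
  -- each vertex of X matched to a selector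
  have hvm : ∀ v ∈ X, ∃ i, i < k ∧ s(KAg.vtx v, KAg.sel i) ∈ M := by
    intro v hv
    obtain ⟨i, hi⟩ := hgsurj ⟨v, hv⟩
    refine ⟨i, i.2, ?_⟩
    have : f i i.2 = v := congrArg Subtype.val hi
    rw [Sym2.eq_swap, ← this]
    exact hfM i i.2
  -- a i and b i matched to each other
  have hab : ∀ i, i < k → s(KAg.a i, KAg.b i) ∈ M := by
    intro i hi
    by_contra hAB
    have hselv : s(KAg.sel i, KAg.vtx (f i hi)) ∈ M := hfM i hi
    have haun : ∀ w, s(KAg.a i, w) ∈ M → False := by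
      intro w hw
      obtain ⟨haccw, _, _⟩ := hedge _ _ hw
      rcases accA i hi w haccw with rfl | rfl
      · exact hAB hw
      · have := hMuniq (KAg.sel i) (KAg.vtx (f i hi)) (KAg.a i) hselv
          (by rwa [Sym2.eq_swap] at hw)
        simp at this
    have hbun : ∀ w, s(KAg.b i, w) ∈ M → False := by
      intro w hw
      obtain ⟨haccw, _, _⟩ := hedge _ _ hw
      rcases accB i hi w haccw with rfl | rfl
      · have := hMuniq (KAg.sel i) (KAg.vtx (f i hi)) (KAg.b i) hselv
          (by rwa [Sym2.eq_swap] at hw)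
        simp at this
      · exact haun _ (by rwa [Sym2.eq_swap] at hw)
    exact hstab (KAg.a i) (KAg.b i) ⟨⟨accAB i hi, haT i hi, hbT i hi⟩,
      fun w hw => absurd hw (fun h => haun _ h),
      fun w hw => absurd hw (fun h => hbun _ h)⟩
  -- perfection
  have hperf : ∀ x ∈ T, ∃ y, s(x, y) ∈ M := by
    intro x hx
    rcases hx with ⟨i, hi, rfl | rfl | rfl⟩ | ⟨v, hv, rfl⟩
    · exact ⟨KAg.vtx (f i hi), hfM i hi⟩
    · exact ⟨KAg.b i, hab i hi⟩
    · exact ⟨KAg.a i, by rw [Sym2.eq_swap]; exact hab i hi⟩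
    · obtain ⟨i, hi, h⟩ := hvm v hv
      exact ⟨KAg.sel i, h⟩
  -- independence
  have hind : ∀ u ∈ X, ∀ v ∈ X, ¬ G.Adj u v := by
    intro u hu v hv hadj
    obtain ⟨i, hi, hui⟩ := hvm u hu
    obtain ⟨j, hj, hvj⟩ := hvm v hv
    have haccuv : I.accept (KAg.vtx u) (KAg.vtx v) := by
      rw [hacc]
      exact Or.inl (Or.inl ⟨u, v, hadj, rfl, rfl⟩)
    refine hstab (KAg.vtx u) (KAg.vtx v)
      ⟨⟨haccuv, hvT u hu, hvT v hv⟩, ?_, ?_⟩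
    · intro w hw
      have hw' : w = KAg.sel i := hMuniq (KAg.vtx u) w (KAg.sel i) hw hui
      subst hw'
      exact ⟨hpVS u v (G.adj_symm hadj) i hi, hvT u hu, hvT v hv, hselT i hi⟩
    · intro w hw
      have hw' : w = KAg.sel j := hMuniq (KAg.vtx v) w (KAg.sel j) hw hvj
      subst hw'
      exact ⟨hpVS v u hadj j hj, hvT v hv, hvT u hu, hselT j hj⟩
  exact ⟨fun i hi => step1 i hi, hXk, hperf, hind⟩
end

section
/- For every set S ⊆ U∖{a,b}: the instance I−S admits a stable matching containing the pair {a,b} if and only if the instance I*−S admits a stable matching covering every agent of (A* ∪ B*) ∖ S. -/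
/-! ## Pair-forcing setup -/

namespace SR

variable {α : Type*}

/-- `betterThan I a b` is the set `{x : x is acceptable to a and x ≻_a b}`;
so `A* = betterThan I a b` and `B* = betterThan I b a`.
(Note that `I.pref a x b` already entails that `x` is acceptable to `a`.) -/
def betterThan (I : SR α) (a b : α) : Set α := {x | I.pref a x b}

/-- The set `F` of acceptable pairs `{x, y}` of `I` such that either
`x ∈ A*` and (`y = a` or `a ≻_x y`), or `x ∈ B*` and (`y = b` or `b ≻_x y`). -/
def forcedF (I : SR α) (a b : α) : Set (Sym2 α) :=
  {p | ∃ x y : α, p = s(x, y) ∧ I.accept x y ∧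
    ((x ∈ I.betterThan a b ∧ (y = a ∨ I.pref x a y)) ∨
     (x ∈ I.betterThan b a ∧ (y = b ∨ I.pref x b y)))}

/-- The instance `I* = I − F`. -/
def forcedInstance (I : SR α) (a b : α) : SR α := I.delPairs (I.forcedF a b)

end SR

namespace SR

variable {α : Type*}

lemma forced_mem₁ (I : SR α) {a b x y : α} (hacc : I.accept x y)
    (hx : x ∈ I.betterThan a b) (hy : y = a ∨ I.pref x a y) :
    s(x, y) ∈ I.forcedF a b := ⟨x, y, rfl, hacc, Or.inl ⟨hx, hy⟩⟩

lemma forced_mem₂ (I : SR α) {a b x y : α} (hacc : I.accept x y)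
    (hx : x ∈ I.betterThan b a) (hy : y = b ∨ I.pref x b y) :
    s(x, y) ∈ I.forcedF a b := ⟨x, y, rfl, hacc, Or.inr ⟨hx, hy⟩⟩

lemma ab_not_forced (I : SR α) (a b : α) : s(a, b) ∉ I.forcedF a b := by
  rintro ⟨x, y, heq, hacc, hcase⟩
  rcases Sym2.eq_iff.mp heq with ⟨h1, h2⟩ | ⟨h1, h2⟩
  · subst h1; subst h2
    rcases hcase with ⟨hx, _⟩ | ⟨hx, _⟩
    · exact I.loopless _ (I.pref_acc hx).1
    · exact I.pref_irrefl _ _ hx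
  · subst h1; subst h2
    rcases hcase with ⟨hx, _⟩ | ⟨hx, _⟩
    · exact I.pref_irrefl _ _ hx
    · exact I.loopless _ (I.pref_acc hx).1

lemma not_forced_spec₁ (I : SR α) {a b x y : α} (hacc : I.accept x y)
    (hnf : s(x, y) ∉ I.forcedF a b) (hx : x ∈ I.betterThan a b) :
    y ≠ a ∧ ¬ I.pref x a y :=
  ⟨fun h => hnf (I.forced_mem₁ hacc hx (Or.inl h)),
   fun h => hnf (I.forced_mem₁ hacc hx (Or.inr h))⟩

lemma not_forced_spec₂ (I : SR α) {a b x y : α} (hacc : I.accept x y)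
    (hnf : s(x, y) ∉ I.forcedF a b) (hx : x ∈ I.betterThan b a) :
    y ≠ b ∧ ¬ I.pref x b y :=
  ⟨fun h => hnf (I.forced_mem₂ hacc hx (Or.inl h)),
   fun h => hnf (I.forced_mem₂ hacc hx (Or.inr h))⟩

end SR

/-- For every set `S ⊆ U ∖ {a, b}`: the instance `I − S` admits a
stable matching containing the pair `{a, b}` iff the instance `I* − S` admits a
stable matching covering every agent of `(A* ∪ B*) ∖ S`. -/
theorem csr_delAg_MP_characterization {α : Type*} [Fintype α] (I : SR α)
    (a b : α) (hab : I.accept a b) :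
    ∀ S : Set α, a ∉ S → b ∉ S →
      ((∃ M : Finset (Sym2 α), (I.delAgents S).IsStable M ∧ s(a, b) ∈ M) ↔
       (∃ M : Finset (Sym2 α), ((I.forcedInstance a b).delAgents S).IsStable M ∧
         ∀ x ∈ (I.betterThan a b ∪ I.betterThan b a) \ S, ∃ y, s(x, y) ∈ M)) := by
  intro S haS hbS
  constructor
  · -- forward direction: M itself works
    rintro ⟨M, ⟨⟨hMacc, hMuniq⟩, hstab⟩, habM⟩
    -- every x ∈ A* \ S is matched, strictly better than a
    have claimA : ∀ x, I.pref a x b → x ∉ S →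
        ∃ w, s(x, w) ∈ M ∧ w ≠ a ∧ I.pref x w a := by
      intro x hx hxS
      have hxa : I.accept x a := I.symm (I.pref_acc hx).1
      by_contra hno
      push_neg at hno
      apply hstab x a
      refine ⟨⟨hxa, hxS, haS⟩, ?_, ?_⟩
      · intro w hw
        by_cases hwa : w = a
        · exfalso
          rw [hwa] at hw
          have hxb : x = b := hMuniq a x b (by rw [Sym2.eq_swap] at hw; exact hw) habM
          exact I.pref_irrefl a b (hxb ▸ hx)
        · have hmem := hMacc x w hw
          have hnp := hno w hw hwa
          have hp : I.pref x a w := by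
            rcases I.pref_total hxa hmem.1 (Ne.symm hwa) with h | h
            · exact h
            · exact absurd h hnp
          exact ⟨hp, hxS, haS, hmem.2.2⟩
      · intro w hw
        have hwb : w = b := hMuniq a w b hw habM
        subst hwb
        exact ⟨hx, haS, hxS, hbS⟩
    -- every x ∈ B* \ S is matched, strictly better than b
    have claimB : ∀ x, I.pref b x a → x ∉ S →
        ∃ w, s(x, w) ∈ M ∧ w ≠ b ∧ I.pref x w b := by
      intro x hx hxS
      have hxb : I.accept x b := I.symm (I.pref_acc hx).1
      by_contra hno
      push_neg at hno
      apply hstab x b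
      refine ⟨⟨hxb, hxS, hbS⟩, ?_, ?_⟩
      · intro w hw
        by_cases hwb : w = b
        · exfalso
          rw [hwb] at hw
          have hxa : x = a := hMuniq b x a (by rw [Sym2.eq_swap] at hw; exact hw)
            (by rw [Sym2.eq_swap] at habM; exact habM)
          exact I.pref_irrefl b a (hxa ▸ hx)
        · have hmem := hMacc x w hw
          have hnp := hno w hw hwb
          have hp : I.pref x b w := by
            rcases I.pref_total hxb hmem.1 (Ne.symm hwb) with h | h
            · exact h
            · exact absurd h hnp
          exact ⟨hp, hxS, hbS, hmem.2.2⟩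
      · intro w hw
        have hwa : w = a := hMuniq b w a hw (by rw [Sym2.eq_swap] at habM; exact habM)
        subst hwa
        exact ⟨hx, hbS, hxS, haS⟩
    refine ⟨M, ⟨⟨?_, hMuniq⟩, ?_⟩, ?_⟩
    · -- M is a matching in I* − S
      intro u v huv
      obtain ⟨hacc, huS, hvS⟩ := hMacc u v huv
      refine ⟨⟨hacc, ?_⟩, huS, hvS⟩
      rintro ⟨x, y, heq, hxyacc, hcase⟩
      have hxyM : s(x, y) ∈ M := heq ▸ huv
      have hxS : x ∉ S := (hMacc x y hxyM).2.1
      rcases hcase with ⟨hxA, hya⟩ | ⟨hxB, hyb⟩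
      · obtain ⟨w, hwM, hwa, hwpref⟩ := claimA x hxA hxS
        have hyw : y = w := hMuniq x y w hxyM hwM
        subst hyw
        rcases hya with rfl | h
        · exact hwa rfl
        · exact I.pref_irrefl x a (I.pref_trans h hwpref)
      · obtain ⟨w, hwM, hwb, hwpref⟩ := claimB x hxB hxS
        have hyw : y = w := hMuniq x y w hxyM hwM
        subst hyw
        rcases hyb with rfl | h
        · exact hwb rfl
        · exact I.pref_irrefl x b (I.pref_trans h hwpref)
    · -- M is stable in I* − S
      intro u v hblk
      obtain ⟨⟨⟨hacc, hnF⟩, huS, hvS⟩, hu, hv⟩ := hblk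
      refine hstab u v ⟨⟨hacc, huS, hvS⟩, ?_, ?_⟩
      · intro w hw
        obtain ⟨⟨hp, _, _⟩, hm⟩ := hu w hw
        exact ⟨hp, hm⟩
      · intro w hw
        obtain ⟨⟨hp, _, _⟩, hm⟩ := hv w hw
        exact ⟨hp, hm⟩
    · -- coverage
      rintro x ⟨hxAB, hxS⟩
      rcases hxAB with hxA | hxB
      · obtain ⟨w, hwM, _, _⟩ := claimA x hxA hxS
        exact ⟨w, hwM⟩
      · obtain ⟨w, hwM, _, _⟩ := claimB x hxB hxS
        exact ⟨w, hwM⟩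
  · -- backward direction: M itself works
    rintro ⟨M, ⟨⟨hMacc, hMuniq⟩, hstab⟩, hcov⟩
    -- first, s(a, b) ∈ M
    have habM : s(a, b) ∈ M := by
      by_contra hnot
      apply hstab a b
      refine ⟨⟨⟨hab, I.ab_not_forced a b⟩, haS, hbS⟩, ?_, ?_⟩
      · intro w hw
        obtain ⟨⟨haw, hawF⟩, _, hwS⟩ := hMacc a w hw
        have hwb : w ≠ b := fun h => hnot (h ▸ hw)
        have hwa : w ≠ a := fun h => I.loopless a (h ▸ haw)
        have hnA : ¬ I.pref a w b := fun h => by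
          have hm := I.forced_mem₁ (I.symm haw) h (Or.inl rfl)
          rw [Sym2.eq_swap] at hm
          exact hawF hm
        have hpref : I.pref a b w := by
          rcases I.pref_total hab haw (Ne.symm hwb) with h | h
          · exact h
          · exact absurd h hnA
        exact ⟨⟨hpref, I.ab_not_forced a b, hawF⟩, haS, hbS, hwS⟩
      · intro w hw
        obtain ⟨⟨hbw, hbwF⟩, _, hwS⟩ := hMacc b w hw
        have hwa : w ≠ a := fun h => hnot (by rw [Sym2.eq_swap]; rw [h] at hw; exact hw)
        have hwb : w ≠ b := fun h => I.loopless b (h ▸ hbw)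
        have hnB : ¬ I.pref b w a := fun h => by
          have hm := I.forced_mem₂ (I.symm hbw) h (Or.inl rfl)
          rw [Sym2.eq_swap] at hm
          exact hbwF hm
        have hpref : I.pref b a w := by
          rcases I.pref_total (I.symm hab) hbw (Ne.symm hwa) with h | h
          · exact h
          · exact absurd h hnB
        have hbaF : s(b, a) ∉ I.forcedF a b := by
          rw [Sym2.eq_swap]; exact I.ab_not_forced a b
        exact ⟨⟨hpref, hbaF, hbwF⟩, hbS, haS, hwS⟩
    refine ⟨M, ⟨⟨?_, hMuniq⟩, ?_⟩, habM⟩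
    · intro u v huv
      obtain ⟨⟨hacc, _⟩, huS, hvS⟩ := hMacc u v huv
      exact ⟨hacc, huS, hvS⟩
    · intro u v hblk
      obtain ⟨⟨hacc, huS, hvS⟩, hu, hv⟩ := hblk
      by_cases hF : s(u, v) ∈ I.forcedF a b
      · obtain ⟨x, y, heq, hxyacc, hcase⟩ := hF
        have hxside : (x ∉ S) ∧ ∀ w, s(x, w) ∈ M → I.pref x y w := by
          rcases Sym2.eq_iff.mp heq with ⟨h1, h2⟩ | ⟨h1, h2⟩
          · subst h1; subst h2; exact ⟨huS, fun w hw => (hu w hw).1⟩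
          · subst h1; subst h2; exact ⟨hvS, fun w hw => (hv w hw).1⟩
        obtain ⟨hxS, hxblk⟩ := hxside
        rcases hcase with ⟨hxA, hya⟩ | ⟨hxB, hyb⟩
        · obtain ⟨p, hpM⟩ := hcov x ⟨Or.inl hxA, hxS⟩
          obtain ⟨⟨hxp, hxpF⟩, -, -⟩ := hMacc x p hpM
          obtain ⟨hpa, hnpref⟩ := I.not_forced_spec₁ hxp hxpF hxA
          have hxyp := hxblk p hpM
          rcases hya with rfl | h
          · exact hnpref hxyp
          · exact hnpref (I.pref_trans h hxyp)
        · obtain ⟨p, hpM⟩ := hcov x ⟨Or.inr hxB, hxS⟩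
          obtain ⟨⟨hxp, hxpF⟩, -, -⟩ := hMacc x p hpM
          obtain ⟨hpb, hnpref⟩ := I.not_forced_spec₂ hxp hxpF hxB
          have hxyp := hxblk p hpM
          rcases hyb with rfl | h
          · exact hnpref hxyp
          · exact hnpref (I.pref_trans h hxyp)
      · refine hstab u v ⟨⟨⟨hacc, hF⟩, huS, hvS⟩, ?_, ?_⟩
        · intro w hw
          have h := hu w hw
          exact ⟨⟨h.1, hF, (hMacc u w hw).1.2⟩, h.2⟩
        · intro w hw
          have h := hv w hw
          have hvuF : s(v, u) ∉ I.forcedF a b := by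
            rw [Sym2.eq_swap]; exact hF
          exact ⟨⟨h.1, hvuF, (hMacc v w hw).1.2⟩, h.2⟩
end

section
/- If S ⊆ U∖{a,b} and M is a stable matching in I−S with {a,b} ∈ M, then M ∩ F = ∅; in particular, M is a matching in I*−S, and M is a stable matching in I*−S. -/
/-- If `S ⊆ U ∖ {a, b}` and `M` is a stable matching in `I − S`
with `{a, b} ∈ M`, then `M ∩ F = ∅`; in particular, `M` is a matching in `I* − S`,
and `M` is a stable matching in `I* − S`. -/
theorem csr_delAg_MP_avoid_forced {α : Type*} [Fintype α] (I : SR α)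
    (a b : α) (hab : I.accept a b)
    (S : Set α) (haS : a ∉ S) (hbS : b ∉ S)
    (M : Finset (Sym2 α)) (hM : (I.delAgents S).IsStable M) (habM : s(a, b) ∈ M) :
    (∀ p ∈ M, p ∉ I.forcedF a b) ∧
    ((I.forcedInstance a b).delAgents S).IsMatching M ∧
    ((I.forcedInstance a b).delAgents S).IsStable M := by

  obtain ⟨⟨hacc, huniq⟩, hstab⟩ := hM
  have hba : s(b, a) ∈ M := by rwa [Sym2.eq_swap] at habM
  have hnS : ∀ u v, s(u, v) ∈ M → u ∉ S := fun u v h => (hacc u v h).2.1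
  have key : ∀ p ∈ M, p ∉ I.forcedF a b := by
    rintro p hp ⟨x, y, rfl, hxy, hcase⟩
    have hxyM : s(x, y) ∈ M := hp
    have hyxM : s(y, x) ∈ M := by rwa [Sym2.eq_swap] at hxyM
    have hxS : x ∉ S := hnS x y hxyM
    have hyS : y ∉ S := hnS y x hyxM
    rcases hcase with ⟨hx, hy⟩ | ⟨hx, hy⟩
    · rcases hy with hya | hy
      case inl =>
        subst hya
        have hxb : x = b := huniq y x b hyxM habM
        subst hxb
        exact I.pref_irrefl y x hx
      · refine hstab a x ⟨⟨(I.pref_acc hx).1, haS, hxS⟩, ?_, ?_⟩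
        · intro w hw
          have : b = w := huniq a b w habM hw
          subst this
          exact ⟨hx, haS, hxS, hbS⟩
        · intro w hw
          have : y = w := huniq x y w hxyM hw
          subst this
          exact ⟨hy, hxS, haS, hyS⟩
    · rcases hy with hyb | hy
      case inl =>
        subst hyb
        have hxa : x = a := huniq y x a hyxM hba
        subst hxa
        exact I.pref_irrefl y x hx
      · refine hstab b x ⟨⟨(I.pref_acc hx).1, hbS, hxS⟩, ?_, ?_⟩
        · intro w hw
          have : a = w := huniq b a w hba hw
          subst this
          exact ⟨hx, hbS, hxS, haS⟩
        · intro w hw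
          have : y = w := huniq x y w hxyM hw
          subst this
          exact ⟨hy, hxS, hbS, hyS⟩
  have hmatch : ((I.forcedInstance a b).delAgents S).IsMatching M := by
    refine ⟨fun u v huv => ⟨⟨(hacc u v huv).1, key _ huv⟩, (hacc u v huv).2⟩, huniq⟩
  refine ⟨key, hmatch, hmatch, ?_⟩
  rintro u v ⟨⟨⟨huv, _⟩, huS, hvS⟩, hu, hv⟩
  refine hstab u v ⟨⟨huv, huS, hvS⟩, ?_, ?_⟩
  · intro w hw
    obtain ⟨⟨h1, _, _⟩, _, _, hw'⟩ := hu w hw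
    exact ⟨h1, huS, hvS, hw'⟩
  · intro w hw
    obtain ⟨⟨h1, _, _⟩, _, _, hw'⟩ := hv w hw
    exact ⟨h1, hvS, huS, hw'⟩
end

section
/- If S ⊆ U∖{a,b} and M is a stable matching in I−S with {a,b} ∈ M, then M covers every agent of (A* ∪ B*) ∖ S. -/
/-- If `S ⊆ U ∖ {a, b}` and `M` is a stable matching in `I − S`
with `{a, b} ∈ M`, then `M` covers every agent of `(A* ∪ B*) ∖ S`. -/
theorem csr_delAg_MP_covers {α : Type*} [Fintype α] (I : SR α)
    (a b : α) (hab : I.accept a b)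
    (S : Set α) (haS : a ∉ S) (hbS : b ∉ S)
    (M : Finset (Sym2 α)) (hM : (I.delAgents S).IsStable M) (habM : s(a, b) ∈ M) :
    ∀ x ∈ (I.betterThan a b ∪ I.betterThan b a) \ S, ∃ y, s(x, y) ∈ M := by
  rintro x ⟨hx, hxS⟩
  by_contra hno
  push_neg at hno
  obtain ⟨hMatch, hStable⟩ := hM
  rcases hx with h | h
  · exact hStable x a ⟨⟨I.symm (I.pref_acc h).1, hxS, haS⟩,
      fun w hw => absurd hw (hno w),
      fun w hw => by
        have hw' : b = w := hMatch.2 a b w habM hw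
        exact hw' ▸ ⟨h, haS, hxS, hbS⟩⟩
  · exact hStable x b ⟨⟨I.symm (I.pref_acc h).1, hxS, hbS⟩,
      fun w hw => absurd hw (hno w),
      fun w hw => by
        have hw' : a = w := hMatch.2 b a w (by rwa [Sym2.eq_swap]) hw
        exact hw' ▸ ⟨h, hbS, hxS, haS⟩⟩
end

section
/- If S ⊆ U∖{a,b} and M is a stable matching in I*−S that covers every agent of (A* ∪ B*) ∖ S, then {a,b} ∈ M and M is a stable matching in I−S. -/
namespace SR

private lemma helper_block {α : Type*} (I : SR α) {M : Finset (Sym2 α)} {z t c : α}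
    (hnot : ∀ w, s(z, w) ∈ M → w ≠ c ∧ ¬ I.pref z c w)
    (hav : t = c ∨ I.pref z c t)
    (hzw : ∃ w, s(z, w) ∈ M)
    (hblk : ∀ w, s(z, w) ∈ M → I.pref z t w) : False := by
  obtain ⟨w, hw⟩ := hzw
  obtain ⟨hwc, hnp⟩ := hnot w hw
  have hp := hblk w hw
  rcases hav with rfl | h
  · exact hnp hp
  · exact hnp (I.pref_trans h hp)

end SR

/-- If `S ⊆ U ∖ {a, b}` and `M` is a stable matching in `I* − S`
that covers every agent of `(A* ∪ B*) ∖ S`, then `{a, b} ∈ M` and `M` is a stable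
matching in `I − S`. -/
theorem csr_delAg_MP_converse {α : Type*} [Fintype α] (I : SR α)
    (a b : α) (hab : I.accept a b)
    (S : Set α) (haS : a ∉ S) (hbS : b ∉ S)
    (M : Finset (Sym2 α)) (hM : ((I.forcedInstance a b).delAgents S).IsStable M)
    (hcov : ∀ x ∈ (I.betterThan a b ∪ I.betterThan b a) \ S, ∃ y, s(x, y) ∈ M) :
    s(a, b) ∈ M ∧ (I.delAgents S).IsStable M := by
  have hMacc : ∀ u v, s(u, v) ∈ M →
      (I.accept u v ∧ s(u, v) ∉ I.forcedF a b) ∧ u ∉ S ∧ v ∉ S := hM.1.1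
  -- s(a,b) ∉ F
  have habF : s(a, b) ∉ I.forcedF a b := by
    rintro ⟨x, y, hxy, hacc, h⟩
    rw [Sym2.eq_iff] at hxy
    rcases hxy with ⟨rfl, rfl⟩ | ⟨rfl, rfl⟩
    · rcases h with ⟨hz, _⟩ | ⟨hz, _⟩
      · exact I.loopless a (I.pref_acc hz).1
      · exact I.pref_irrefl b a hz
    · rcases h with ⟨hz, _⟩ | ⟨hz, _⟩
      · exact I.pref_irrefl a b hz
      · exact I.loopless b (I.pref_acc hz).1
  -- extracting consequences of not being in F
  have hFnot : ∀ z w, I.accept z w → s(z, w) ∉ I.forcedF a b →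
      (I.pref a z b → w ≠ a ∧ ¬ I.pref z a w) ∧
      (I.pref b z a → w ≠ b ∧ ¬ I.pref z b w) := by
    intro z w hacc hnF
    constructor
    · intro hz
      constructor
      · intro hwa; exact hnF ⟨z, w, rfl, hacc, Or.inl ⟨hz, Or.inl hwa⟩⟩
      · intro hp; exact hnF ⟨z, w, rfl, hacc, Or.inl ⟨hz, Or.inr hp⟩⟩
    · intro hz
      constructor
      · intro hwb; exact hnF ⟨z, w, rfl, hacc, Or.inr ⟨hz, Or.inl hwb⟩⟩
      · intro hp; exact hnF ⟨z, w, rfl, hacc, Or.inr ⟨hz, Or.inr hp⟩⟩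
  have hbaF : s(b, a) ∉ I.forcedF a b := by rw [Sym2.eq_swap]; exact habF
  -- Step 1 : s(a,b) ∈ M
  have habM : s(a, b) ∈ M := by
    by_contra hnm
    refine hM.2 a b ⟨⟨⟨hab, habF⟩, haS, hbS⟩, ?_, ?_⟩
    · intro w hw
      obtain ⟨⟨haw, hawF⟩, _, hwS⟩ := hMacc a w hw
      have hwb : w ≠ b := by rintro rfl; exact hnm hw
      have hpref : I.pref a b w := by
        rcases I.pref_total hab haw (Ne.symm hwb) with hp | hp
        · exact hp
        · exact absurd (⟨w, a, Sym2.eq_swap, I.symm haw, Or.inl ⟨hp, Or.inl rfl⟩⟩ :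
            s(a, w) ∈ I.forcedF a b) hawF
      exact ⟨⟨hpref, habF, hawF⟩, haS, hbS, hwS⟩
    · intro w hw
      obtain ⟨⟨hbw, hbwF⟩, _, hwS⟩ := hMacc b w hw
      have hwa : w ≠ a := by
        rintro rfl; exact hnm (by rw [Sym2.eq_swap]; exact hw)
      have hpref : I.pref b a w := by
        rcases I.pref_total (I.symm hab) hbw (Ne.symm hwa) with hp | hp
        · exact hp
        · exact absurd (⟨w, b, Sym2.eq_swap, I.symm hbw, Or.inr ⟨hp, Or.inl rfl⟩⟩ :
            s(b, w) ∈ I.forcedF a b) hbwF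
      exact ⟨⟨hpref, hbaF, hbwF⟩, hbS, haS, hwS⟩
  refine ⟨habM, ⟨⟨?_, hM.1.2⟩, ?_⟩⟩
  · intro u v huv
    obtain ⟨⟨h1, _⟩, h2, h3⟩ := hMacc u v huv
    exact ⟨h1, h2, h3⟩
  · intro u v hblk
    obtain ⟨⟨huv, huS, hvS⟩, h1, h2⟩ := hblk
    by_cases hF : s(u, v) ∈ I.forcedF a b
    · obtain ⟨x, y, hxy, hacc, hor⟩ := hF
      rw [Sym2.eq_iff] at hxy
      rcases hxy with ⟨rfl, rfl⟩ | ⟨rfl, rfl⟩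
      · -- x = u, y = v : use u's side
        have hcovu : ∀ hz : u ∈ I.betterThan a b ∪ I.betterThan b a,
            ∃ w, s(u, w) ∈ M := fun hz => hcov u ⟨hz, huS⟩
        have hblku : ∀ w, s(u, w) ∈ M → I.pref u v w := fun w hw => (h1 w hw).1
        rcases hor with ⟨hz, hav⟩ | ⟨hz, hav⟩
        · exact absurd (SR.helper_block I
            (fun w hw => (hFnot u w (hMacc u w hw).1.1 (hMacc u w hw).1.2).1 hz)
            hav (hcovu (Or.inl hz)) hblku) not_false
        · exact absurd (SR.helper_block I
            (fun w hw => (hFnot u w (hMacc u w hw).1.1 (hMacc u w hw).1.2).2 hz)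
            hav (hcovu (Or.inr hz)) hblku) not_false
      · -- x = v, y = u : use v's side
        have hcovv : ∀ hz : v ∈ I.betterThan a b ∪ I.betterThan b a,
            ∃ w, s(v, w) ∈ M := fun hz => hcov v ⟨hz, hvS⟩
        have hblkv : ∀ w, s(v, w) ∈ M → I.pref v u w := fun w hw => (h2 w hw).1
        rcases hor with ⟨hz, hav⟩ | ⟨hz, hav⟩
        · exact absurd (SR.helper_block I
            (fun w hw => (hFnot v w (hMacc v w hw).1.1 (hMacc v w hw).1.2).1 hz)
            hav (hcovv (Or.inl hz)) hblkv) not_false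
        · exact absurd (SR.helper_block I
            (fun w hw => (hFnot v w (hMacc v w hw).1.1 (hMacc v w hw).1.2).2 hz)
            hav (hcovv (Or.inr hz)) hblkv) not_false
    · have hF' : s(v, u) ∉ I.forcedF a b := by rw [Sym2.eq_swap]; exact hF
      refine hM.2 u v ⟨⟨⟨huv, hF⟩, huS, hvS⟩, ?_, ?_⟩
      · intro w hw
        obtain ⟨⟨_, hwF⟩, _, hwS⟩ := hMacc u w hw
        exact ⟨⟨(h1 w hw).1, hF, hwF⟩, huS, hvS, hwS⟩
      · intro w hw
        obtain ⟨⟨_, hwF⟩, _, hwS⟩ := hMacc v w hw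
        exact ⟨⟨(h2 w hw).1, hF', hwF⟩, hvS, huS, hwS⟩
end
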